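/- Let u be an infinite word over alphabet A = {1,…,d} with uniform letter frequency vector f, admitting an S-adic representation with directive sequence (σ_n) with incidence matrices (M_n). Suppose that every factor w of u decomposes (Dumont–Thomas) as w = p_0 σ_0(p_1 ⋯ σ_{n-1}(p_n σ_n(p_{n+1} s_{n+1}) s_n) ⋯ s_1) s_0 where each p_j, s_j is respectively a suffix/prefix of an image of a letter under σ_j. If Σ_{n≥0} ‖(ᵀM_0⋯M_{n-1})|_{f^⊥}‖·‖M_n‖ < ∞, then u is balanced: there exists C such that for every factor w of u and every letter i, ||w|_i − f_i|w|| ≤ C. -/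
import Mathlib


open Filter Topology Matrix

/-- The factor of the infinite word `u` of length `n` starting at position `k`. -/
def factorAt {A : Type*} (u : ℕ → A) (k n : ℕ) : List A :=
  (List.range n).map (fun j => u (k + j))

/-- `w` is a factor of the infinite word `u`. -/
def IsFactor {A : Type*} (u : ℕ → A) (w : List A) : Prop :=
  ∃ k, w = factorAt u k w.length

/-- The application of a substitution to a finite word. -/
def applyW {A : Type*} (σ : A → List A) (w : List A) : List A :=
  w.flatMap σ

/-- The Dumont–Thomas nested decomposition
`p_0 σ_0(p_1 ⋯ σ_{n-1}(p_n σ_n(p_{n+1} s_{n+1}) s_n) ⋯ s_1) s_0`, built from the innermost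
level outwards: `nestedAux σ p s n (n+1)` is the full decomposition with deepest level `n+1`. -/
def nestedAux {A : Type*} (σ : ℕ → A → List A) (p s : ℕ → List A) (n : ℕ) :
    ℕ → List A
  | 0 => p (n + 1) ++ s (n + 1)
  | k + 1 => p (n - k) ++ applyW (σ (n - k)) (nestedAux σ p s n k) ++ s (n - k)

/-- The incidence matrix of a substitution on `Fin d`, as a real matrix. -/
noncomputable def incMat (d : ℕ) (σ : Fin d → List (Fin d)) : Matrix (Fin d) (Fin d) ℝ :=
  Matrix.of fun i j => ((σ j).count i : ℝ)

noncomputable def abv {d : ℕ} (w : List (Fin d)) : Fin d → ℝ := fun i => (w.count i : ℝ)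

lemma abv_append {d : ℕ} (w w' : List (Fin d)) : abv (w ++ w') = abv w + abv w' := by
  funext i; simp [abv, List.count_append]

lemma length_eq_sum_abv {d : ℕ} (w : List (Fin d)) : (w.length : ℝ) = ∑ j, abv w j := by
  induction w with
  | nil => simp [abv]
  | cons a w ih =>
    have h2 : ∑ j, abv (a :: w) j = (∑ j, abv w j) + 1 := by
      simp [abv, List.count_cons, Finset.sum_add_distrib]
    rw [h2, ← ih]
    simp [add_comm]

lemma abv_applyW {d : ℕ} (τ : Fin d → List (Fin d)) (w : List (Fin d)) :
    abv (applyW τ w) = (incMat d τ).mulVec (abv w) := by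
  induction w with
  | nil => funext i; simp [abv, applyW, Matrix.mulVec, dotProduct]
  | cons a w ih =>
    have h : applyW τ (a :: w) = τ a ++ applyW τ w := rfl
    rw [h, abv_append, ih]
    funext i
    simp [abv, Matrix.mulVec, dotProduct, incMat, List.count_cons, mul_add,
      Finset.sum_add_distrib, mul_ite, Finset.sum_ite_eq']
    ring


noncomputable def prodFL (d : ℕ) (σ : ℕ → Fin d → List (Fin d)) (m j : ℕ) :
    Matrix (Fin d) (Fin d) ℝ :=
  ((List.range j).map fun t => incMat d (σ (m + t))).prod

lemma prodFL_succ (d : ℕ) (σ : ℕ → Fin d → List (Fin d)) (m j : ℕ) :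
    prodFL d σ m (j+1) = incMat d (σ m) * prodFL d σ (m+1) j := by
  unfold prodFL
  rw [List.range_succ_eq_map]
  simp only [List.map_cons, List.map_map, List.prod_cons, Nat.add_zero]
  have he : List.map ((fun t => incMat d (σ (m + t))) ∘ Nat.succ) (List.range j) =
      List.map (fun t => incMat d (σ (m + 1 + t))) (List.range j) := by
    apply List.map_congr_left
    intro t _
    have : m + Nat.succ t = m + 1 + t := by omega
    simp only [Function.comp_apply, this]
  rw [he]

lemma mulVec_sum' {d : ℕ} (M : Matrix (Fin d) (Fin d) ℝ) (t : Finset ℕ) (v : ℕ → Fin d → ℝ) :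
    M.mulVec (∑ j ∈ t, v j) = ∑ j ∈ t, M.mulVec (v j) := by
  funext i
  simp only [Matrix.mulVec, dotProduct, Finset.sum_apply, Finset.mul_sum]
  rw [Finset.sum_comm]

lemma abv_nested {d : ℕ} (σ : ℕ → Fin d → List (Fin d)) (p s : ℕ → List (Fin d)) (n : ℕ) :
    ∀ k, k ≤ n + 1 →
    abv (nestedAux σ p s n k) =
      ∑ j ∈ Finset.range (k + 1),
        (prodFL d σ (n + 1 - k) j).mulVec (abv (p (n + 1 - k + j)) + abv (s (n + 1 - k + j))) := by
  intro k
  induction k with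
  | zero =>
    intro _
    simp [nestedAux, abv_append, prodFL, Matrix.one_mulVec]
  | succ k ih =>
    intro hk1
    have hk : k ≤ n := Nat.lt_succ_iff.mp hk1
    have hm : n + 1 - (k+1) = n - k := by omega
    have hm2 : n + 1 - k = (n - k) + 1 := by omega
    have hstep : nestedAux σ p s n (k+1)
        = p (n - k) ++ applyW (σ (n - k)) (nestedAux σ p s n k) ++ s (n - k) := rfl
    rw [hstep, abv_append, abv_append, abv_applyW, ih (Nat.le_succ_of_le hk), hm, hm2,
      mulVec_sum']
    rw [Finset.sum_range_succ' (fun j =>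
      (prodFL d σ (n - k) j).mulVec (abv (p (n - k + j)) + abv (s (n - k + j)))) (k+1)]
    have h0 : (prodFL d σ (n - k) 0).mulVec (abv (p (n - k + 0)) + abv (s (n - k + 0)))
        = abv (p (n - k)) + abv (s (n - k)) := by
      simp [prodFL, Matrix.one_mulVec]
    rw [h0]
    have hterm : ∀ j, (prodFL d σ (n - k) (j + 1)).mulVec
          (abv (p (n - k + (j + 1))) + abv (s (n - k + (j + 1))))
        = (incMat d (σ (n - k))).mulVec ((prodFL d σ (n - k + 1) j).mulVec
          (abv (p (n - k + 1 + j)) + abv (s (n - k + 1 + j)))) := by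
      intro j
      have e : n - k + (j + 1) = n - k + 1 + j := by omega
      rw [prodFL_succ, ← Matrix.mulVec_mulVec, e]
    simp only [hterm]
    abel


/-- Balancedness criterion: if `u` has uniform letter frequency vector `f`, every factor of
`u` admits a Dumont–Thomas decomposition along the directive sequence `(σ_n)`, and
`Σ_n ‖(ᵀ(M_0⋯M_{n-1}))|_{f^⊥}‖ ⬝ ‖M_n‖ < ∞` (with `c n` bounding the norm of the transposed
product restricted to `f^⊥`, and `‖M_n‖` comparable to `max_b |σ_n(b)|`), then `u` is
balanced: `||w|_i − f_i |w|| ≤ C` for all factors `w` and letters `i`. -/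
theorem sadic_balancedness_criterion (d : ℕ)
    (σ : ℕ → Fin d → List (Fin d)) (u : ℕ → Fin d)
    (f : Fin d → ℝ) (hf1 : ∑ i, f i = 1)
    (hfreq : ∀ i : Fin d,
      Tendsto (fun n => ((factorAt u 0 n).count i : ℝ) / n) atTop (𝓝 (f i)))
    (hDT : ∀ w : List (Fin d), IsFactor u w → ∃ (n : ℕ) (p s : ℕ → List (Fin d)),
      (∀ j ≤ n + 1, (∃ b, p j <:+ σ j b) ∧ (∃ b, s j <+: σ j b)) ∧
      w = nestedAux σ p s n (n + 1))
    (c : ℕ → ℝ) (hc : ∀ n, 0 ≤ c n)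
    (hcop : ∀ (n : ℕ) (v : Fin d → ℝ), (∑ i, f i * v i) = 0 →
      ‖((((List.range n).map fun k => incMat d (σ k)).prod)ᵀ).mulVec v‖ ≤ c n * ‖v‖)
    (hsum : Summable fun n => c n * ((Finset.univ.sup (fun b => ((σ n) b).length) : ℕ) : ℝ)) :
    ∃ C : ℝ, ∀ w : List (Fin d), IsFactor u w → ∀ i : Fin d,
      |(w.count i : ℝ) - f i * w.length| ≤ C := by
  classical
  set K : ℝ := 1 + ∑ i, |f i| with hKdef
  have hK0 : (0:ℝ) ≤ K := by positivity
  set S : ℝ := ∑' n, c n * ((Finset.univ.sup (fun b => ((σ n) b).length) : ℕ) : ℝ) with hSdef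
  refine ⟨2 * K * S, ?_⟩
  intro w hw i
  obtain ⟨n, p, s, hps, hwe⟩ := hDT w hw
  set v : Fin d → ℝ := fun j => (if j = i then 1 else 0) - f i with hv
  have hv0 : ∑ j, f j * v j = 0 := by
    simp only [hv, mul_sub, Finset.sum_sub_distrib, mul_ite, mul_one, mul_zero,
      Finset.sum_ite_eq', Finset.mem_univ, if_true, ← Finset.sum_mul, hf1, one_mul, sub_self]
  have hvK : ‖v‖ ≤ K := by
    rw [pi_norm_le_iff_of_nonneg hK0]
    intro j
    have h1 : |f i| ≤ ∑ i', |f i'| :=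
      Finset.single_le_sum (f := fun i' => |f i'|) (fun _ _ => abs_nonneg _) (Finset.mem_univ i)
    have h2 : ‖v j‖ ≤ 1 + |f i| := by
      calc ‖v j‖ ≤ ‖(if j = i then (1:ℝ) else 0)‖ + ‖f i‖ := norm_sub_le _ _
      _ ≤ 1 + |f i| := by rw [Real.norm_eq_abs, Real.norm_eq_abs]; split <;> simp
    rw [hKdef]; linarith
  have hdisc : (w.count i : ℝ) - f i * w.length = ∑ j, v j * abv w j := by
    rw [length_eq_sum_abv]
    simp only [hv, sub_mul, Finset.sum_sub_distrib, ite_mul, one_mul, zero_mul,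
      Finset.sum_ite_eq', Finset.mem_univ, if_true, ← Finset.mul_sum]
    rfl
  have hab : abv w = ∑ t ∈ Finset.range (n + 2),
      (prodFL d σ 0 t).mulVec (abv (p t) + abv (s t)) := by
    rw [hwe]
    have h := abv_nested σ p s n (n+1) (le_refl _)
    simpa [Nat.sub_self] using h
  have hdot : ∑ j, v j * abv w j = ∑ t ∈ Finset.range (n+2),
      ∑ j, v j * ((prodFL d σ 0 t).mulVec (abv (p t) + abv (s t))) j := by
    rw [hab]
    simp only [Finset.sum_apply, Finset.mul_sum]
    rw [Finset.sum_comm]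
  have hbound : ∀ t ∈ Finset.range (n+2),
      |∑ j, v j * ((prodFL d σ 0 t).mulVec (abv (p t) + abv (s t))) j|
        ≤ 2 * K * (c t * ((Finset.univ.sup (fun b => ((σ t) b).length) : ℕ) : ℝ)) := by
    intro t ht
    set xt : Fin d → ℝ := abv (p t) + abv (s t) with hxt
    set P : Matrix (Fin d) (Fin d) ℝ := ((List.range t).map fun k => incMat d (σ k)).prod
      with hP
    have hPF : prodFL d σ 0 t = P := by
      rw [hP, prodFL]
      congr 1
      apply List.map_congr_left
      intro a _
      rw [Nat.zero_add]
    have key : (∑ j, v j * ((prodFL d σ 0 t).mulVec xt) j)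
        = dotProduct ((Pᵀ).mulVec v) xt := by
      rw [hPF, Matrix.mulVec_transpose, ← Matrix.dotProduct_mulVec]
      rfl
    rw [key]
    have ha : ‖(Pᵀ).mulVec v‖ ≤ c t * K := by
      calc ‖(Pᵀ).mulVec v‖ ≤ c t * ‖v‖ := hcop t v hv0
      _ ≤ c t * K := mul_le_mul_of_nonneg_left hvK (hc t)
    have cs : |dotProduct ((Pᵀ).mulVec v) xt| ≤ ‖(Pᵀ).mulVec v‖ * ∑ j, |xt j| := by
      calc |∑ j, ((Pᵀ).mulVec v) j * xt j| ≤ ∑ j, |((Pᵀ).mulVec v) j * xt j| :=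
            Finset.abs_sum_le_sum_abs _ _
      _ ≤ ∑ j, ‖(Pᵀ).mulVec v‖ * |xt j| := Finset.sum_le_sum (fun j _ => by
            rw [abs_mul]
            refine mul_le_mul_of_nonneg_right ?_ (abs_nonneg _)
            simpa [Real.norm_eq_abs] using norm_le_pi_norm ((Pᵀ).mulVec v) j)
      _ = ‖(Pᵀ).mulVec v‖ * ∑ j, |xt j| := (Finset.mul_sum _ _ _).symm
    have hxsum : ∑ j, |xt j| = ((p t).length : ℝ) + (s t).length := by
      have hnn : ∀ j, |xt j| = xt j := fun j => abs_of_nonneg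
        (add_nonneg (Nat.cast_nonneg _) (Nat.cast_nonneg _))
      rw [Finset.sum_congr rfl (fun j _ => hnn j)]
      simp only [hxt, Pi.add_apply, Finset.sum_add_distrib, ← length_eq_sum_abv]
    obtain ⟨⟨b1, hb1⟩, ⟨b2, hb2⟩⟩ := hps t (by simp at ht; omega)
    have hLt : (0:ℝ) ≤ ((Finset.univ.sup (fun b => ((σ t) b).length) : ℕ) : ℝ) :=
      Nat.cast_nonneg _
    have hp1 : ((p t).length : ℝ) ≤ ((Finset.univ.sup (fun b => ((σ t) b).length) : ℕ) : ℝ) := by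
      exact_mod_cast le_trans hb1.length_le (Finset.le_sup (f := fun b => ((σ t) b).length) (Finset.mem_univ b1))
    have hp2 : ((s t).length : ℝ) ≤ ((Finset.univ.sup (fun b => ((σ t) b).length) : ℕ) : ℝ) := by
      exact_mod_cast le_trans hb2.length_le (Finset.le_sup (f := fun b => ((σ t) b).length) (Finset.mem_univ b2))
    calc |dotProduct ((Pᵀ).mulVec v) xt| ≤ ‖(Pᵀ).mulVec v‖ * ∑ j, |xt j| := cs
    _ ≤ (c t * K) * (((p t).length : ℝ) + (s t).length) := by
        rw [hxsum]
        apply mul_le_mul ha le_rfl (by positivity) (le_trans (norm_nonneg _) ha)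
    _ ≤ (c t * K) * (2 * ((Finset.univ.sup (fun b => ((σ t) b).length) : ℕ) : ℝ)) := by
        apply mul_le_mul_of_nonneg_left (by linarith) (mul_nonneg (hc t) hK0)
    _ = 2 * K * (c t * ((Finset.univ.sup (fun b => ((σ t) b).length) : ℕ) : ℝ)) := by ring
  rw [hdisc, hdot]
  calc |∑ t ∈ Finset.range (n+2), ∑ j, v j * ((prodFL d σ 0 t).mulVec (abv (p t) + abv (s t))) j|
      ≤ ∑ t ∈ Finset.range (n+2),
        |∑ j, v j * ((prodFL d σ 0 t).mulVec (abv (p t) + abv (s t))) j| :=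
        Finset.abs_sum_le_sum_abs _ _
  _ ≤ ∑ t ∈ Finset.range (n+2),
        2 * K * (c t * ((Finset.univ.sup (fun b => ((σ t) b).length) : ℕ) : ℝ)) :=
        Finset.sum_le_sum hbound
  _ = 2 * K * ∑ t ∈ Finset.range (n+2),
        c t * ((Finset.univ.sup (fun b => ((σ t) b).length) : ℕ) : ℝ) := by
        rw [Finset.mul_sum]
  _ ≤ 2 * K * S := by
        apply mul_le_mul_of_nonneg_left _ (by positivity)
        rw [hSdef]
        exact Summable.sum_le_tsum _ (fun t _ => mul_nonneg (hc t) (Nat.cast_nonneg _)) hsum
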